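/- (Monotonicity of the form-factor ratio, Eq. (der2).) Fix an integer m ≥ 1. For g > 1 define ε_x(g) = |g − e^{2πi x/m}| and L(g) = 2·Σ_{p=0}^{m−1} Σ_{q=0}^{m−1} log(ε_p(g) + ε_{q+1/2}(g)) − Σ_{p=0}^{m−1} Σ_{p'=0}^{m−1} log(ε_p(g) + ε_{p'}(g)) − Σ_{q=0}^{m−1} Σ_{q'=0}^{m−1} log(ε_{q+1/2}(g) + ε_{q'+1/2}(g)). Then for every g₀ > 1, L is differentiable at g₀ with L'(g₀) = (1/2)·(g₀⁻¹ − g₀)·( Z₊(g₀) − Z₋(g₀) )², where Z₊(g) = Σ_{p=0}^{m−1} ε_p(g)⁻¹ and Z₋(g) = Σ_{q=0}^{m−1} ε_{q+1/2}(g)⁻¹; in particular L'(g₀) ≤ 0, so L is nonincreasing on (1, ∞). -/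

import Mathlib

open scoped Real

/-- `ε_x = |g - e^{2πi x/m}|` for the transverse-field Ising chain of length `m`. -/
noncomputable def eps (m : ℕ) (g x : ℝ) : ℝ :=
  ‖(g : ℂ) - Complex.exp (2 * Real.pi * Complex.I * (x : ℂ) / (m : ℂ))‖

/-- The ground state energy splitting
`δ(g, m) = (1/2) (Σ_{j<m} ε_{j+1/2} - Σ_{j<m} ε_j)` of the periodic one-dimensional
transverse-field Ising chain on `m` qubits. -/
noncomputable def tfimDelta (m : ℕ) (g : ℝ) : ℝ :=
  (1 / 2) * ((∑ j ∈ Finset.range m, eps m g ((j : ℝ) + 1 / 2))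
    - ∑ j ∈ Finset.range m, eps m g (j : ℝ))

/-- `L(g) = 8 log η(g)`: the logarithm of the normalized form factor of the
one-dimensional transverse-field Ising chain, cf. Eq. (xi). -/
noncomputable def formFactorLog (m : ℕ) (g : ℝ) : ℝ :=
  2 * ∑ p ∈ Finset.range m, ∑ q ∈ Finset.range m,
      Real.log (eps m g (p : ℝ) + eps m g ((q : ℝ) + 1 / 2))
    - ∑ p ∈ Finset.range m, ∑ p' ∈ Finset.range m,
      Real.log (eps m g (p : ℝ) + eps m g ((p' : ℝ)))
    - ∑ q ∈ Finset.range m, ∑ q' ∈ Finset.range m,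
      Real.log (eps m g ((q : ℝ) + 1 / 2) + eps m g ((q' : ℝ) + 1 / 2))

/-- `Z₊(g) = Σ_p ε_p⁻¹` over integer momenta. -/
noncomputable def Zplus (m : ℕ) (g : ℝ) : ℝ :=
  ∑ p ∈ Finset.range m, (eps m g (p : ℝ))⁻¹

/-- `Z₋(g) = Σ_q ε_{q+1/2}⁻¹` over half-integer momenta. -/
noncomputable def Zminus (m : ℕ) (g : ℝ) : ℝ :=
  ∑ q ∈ Finset.range m, (eps m g ((q : ℝ) + 1 / 2))⁻¹

/-!
Write `ε_z(g) = ‖g - z‖` for a point `z` of the unit circle. Since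
`ε_z² = g² - 2g Re z + 1`, one has `dε_z/dg = ε_z/(2g) + (g² - 1)/(2g ε_z)`, and therefore
`d/dg log(ε_z + ε_w) = 1/(2g) + (g² - 1)/(2g) · ε_z⁻¹ ε_w⁻¹`. Summed over the three double
sums of `L`, the terms `1/(2g)` cancel (`2m² - m² - m² = 0`) and what is left is
`(g² - 1)/(2g) · (2Z₊Z₋ - Z₊² - Z₋²) = -(g² - 1)/(2g) · (Z₊ - Z₋)²`, which is `≤ 0` for `g > 1`.
-/

open Real Finset

section UnitCircle

variable {z w : ℂ} {g : ℝ}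

theorem hasDerivAt_norm_ofReal_sub (h : (g : ℂ) ≠ z) :
    HasDerivAt (fun t : ℝ => ‖(t : ℂ) - z‖) ((g - z.re) / ‖(g : ℂ) - z‖) g := by
  have hsq : HasDerivAt (fun t : ℝ => ‖(t : ℂ) - z‖ ^ 2) (2 * (g - z.re)) g := by
    simpa [Complex.inner] using (Complex.ofRealCLM.hasDerivAt (x := g)).sub_const z |>.norm_sq
  have hpos : ‖(g : ℂ) - z‖ ≠ 0 := norm_ne_zero_iff.mpr (sub_ne_zero.mpr h)
  convert hsq.sqrt (pow_ne_zero 2 hpos) using 1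
  · simp only [Real.sqrt_sq (norm_nonneg _)]
  · rw [Real.sqrt_sq (norm_nonneg _)]
    field_simp

theorem norm_ofReal_sub_sq (hz : ‖z‖ = 1) (g : ℝ) :
    ‖(g : ℂ) - z‖ ^ 2 = g ^ 2 - 2 * g * z.re + 1 := by
  have hz' := Complex.sq_norm z
  rw [hz, Complex.normSq_apply] at hz'
  rw [Complex.sq_norm, Complex.normSq_apply]
  simp only [Complex.sub_re, Complex.sub_im, Complex.ofReal_re, Complex.ofReal_im]
  linear_combination -hz'

theorem norm_ofReal_sub_pos (hz : ‖z‖ = 1) (hg : 1 < g) : 0 < ‖(g : ℂ) - z‖ := by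
  have h := norm_sub_norm_le (g : ℂ) z
  rw [Complex.norm_real, Real.norm_of_nonneg (by linarith), hz] at h
  linarith

theorem hasDerivAt_log_norm_add_norm (hz : ‖z‖ = 1) (hw : ‖w‖ = 1) (hg : 1 < g) :
    HasDerivAt (fun t : ℝ => log (‖(t : ℂ) - z‖ + ‖(t : ℂ) - w‖))
      ((2 * g)⁻¹ + (g ^ 2 - 1) / (2 * g) * (‖(g : ℂ) - z‖⁻¹ * ‖(g : ℂ) - w‖⁻¹)) g := by
  have hεz := norm_ofReal_sub_pos hz hg
  have hεw := norm_ofReal_sub_pos hw hg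
  have hdz := hasDerivAt_norm_ofReal_sub (sub_ne_zero.mp (norm_pos_iff.mp hεz))
  have hdw := hasDerivAt_norm_ofReal_sub (sub_ne_zero.mp (norm_pos_iff.mp hεw))
  convert (hdz.fun_add hdw).log (add_pos hεz hεw).ne' using 1
  have hg0 : g ≠ 0 := by linarith
  field_simp
  linear_combination
    norm_ofReal_sub_sq hz g * ‖(g : ℂ) - w‖ + norm_ofReal_sub_sq hw g * ‖(g : ℂ) - z‖

end UnitCircle

theorem hasDerivAt_sum_sum_log_norm_add_norm {ι κ : Type*} (s : Finset ι) (t : Finset κ)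
    {z : ι → ℂ} {w : κ → ℂ} (hz : ∀ i ∈ s, ‖z i‖ = 1) (hw : ∀ j ∈ t, ‖w j‖ = 1) {g : ℝ}
    (hg : 1 < g) :
    HasDerivAt (fun x : ℝ => ∑ i ∈ s, ∑ j ∈ t, log (‖(x : ℂ) - z i‖ + ‖(x : ℂ) - w j‖))
      (#s * #t * (2 * g)⁻¹ + (g ^ 2 - 1) / (2 * g) *
        ((∑ i ∈ s, ‖(g : ℂ) - z i‖⁻¹) * ∑ j ∈ t, ‖(g : ℂ) - w j‖⁻¹)) g := by
  refine (HasDerivAt.fun_sum fun i hi => HasDerivAt.fun_sum fun j hj =>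
    hasDerivAt_log_norm_add_norm (hz i hi) (hw j hj) hg).congr_deriv ?_
  simp only [sum_add_distrib, sum_const, ← mul_sum, sum_mul_sum, nsmul_eq_mul]
  ring

theorem norm_exp_two_pi_I_mul_div (m : ℕ) (x : ℝ) :
    ‖Complex.exp (2 * π * Complex.I * x / m)‖ = 1 := by
  rw [show 2 * π * Complex.I * x / m = ((2 * π * x / m : ℝ) : ℂ) * Complex.I by push_cast; ring]
  exact Complex.norm_exp_ofReal_mul_I _

theorem hasDerivAt_formFactorLog (m : ℕ) {g : ℝ} (hg : 1 < g) :
    HasDerivAt (formFactorLog m) ((1 / 2) * (g⁻¹ - g) * (Zplus m g - Zminus m g) ^ 2) g := by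
  let ζ (x : ℝ) : ℂ := Complex.exp (2 * π * Complex.I * x / m)
  have hsum (a b : ℕ → ℝ) := hasDerivAt_sum_sum_log_norm_add_norm (range m) (range m)
    (z := fun i => ζ (a i)) (w := fun j => ζ (b j))
    (fun _ _ => norm_exp_two_pi_I_mul_div m _) (fun _ _ => norm_exp_two_pi_I_mul_div m _) hg
  refine ((((hsum (↑) (· + 1 / 2)).const_mul 2).fun_sub (hsum (↑) (↑))).fun_sub
    (hsum (· + 1 / 2) (· + 1 / 2))).congr_deriv ?_
  have hg0 : g ≠ 0 := by linarith
  simp only [Zplus, Zminus, eps]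
  field_simp
  ring

theorem half_mul_inv_sub_self_mul_sq_nonpos {g : ℝ} (hg : 1 ≤ g) (x : ℝ) :
    (1 / 2) * (g⁻¹ - g) * x ^ 2 ≤ 0 := by
  have : g⁻¹ ≤ g := (inv_le_one_of_one_le₀ hg).trans hg
  exact mul_nonpos_of_nonpos_of_nonneg (by linarith) (sq_nonneg x)

theorem form_factor_log_monotone_general (m : ℕ) :
    (∀ g₀ : ℝ, 1 < g₀ →
      HasDerivAt (formFactorLog m)
        ((1 / 2) * (g₀⁻¹ - g₀) * (Zplus m g₀ - Zminus m g₀) ^ 2) g₀ ∧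
      (1 / 2) * (g₀⁻¹ - g₀) * (Zplus m g₀ - Zminus m g₀) ^ 2 ≤ 0) ∧
    AntitoneOn (formFactorLog m) (Set.Ioi 1) := by
  have hderiv (g : ℝ) (hg : 1 < g) := hasDerivAt_formFactorLog m hg
  have hnonpos (g : ℝ) (hg : 1 < g) := half_mul_inv_sub_self_mul_sq_nonpos hg.le
    (Zplus m g - Zminus m g)
  refine ⟨fun g hg => ⟨hderiv g hg, hnonpos g hg⟩, ?_⟩
  refine antitoneOn_of_hasDerivWithinAt_nonpos (convex_Ioi 1)
    (f' := fun g => (1 / 2) * (g⁻¹ - g) * (Zplus m g - Zminus m g) ^ 2)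
    (fun g hg => (hderiv g hg).continuousAt.continuousWithinAt) ?_ ?_ <;>
    rw [interior_Ioi]
  · exact fun g hg => (hderiv g hg).hasDerivWithinAt
  · exact hnonpos

/-- **Monotonicity of the form-factor ratio** (Eq. (der2)): for every `g₀ > 1`,
`L'(g₀) = (1/2)(g₀⁻¹ - g₀)(Z₊(g₀) - Z₋(g₀))² ≤ 0`, so `L` is nonincreasing on `(1, ∞)`. -/
theorem form_factor_log_monotone (m : ℕ) (hm : 1 ≤ m) :
    (∀ g₀ : ℝ, 1 < g₀ →
      HasDerivAt (formFactorLog m)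
        ((1 / 2) * (g₀⁻¹ - g₀) * (Zplus m g₀ - Zminus m g₀) ^ 2) g₀ ∧
      (1 / 2) * (g₀⁻¹ - g₀) * (Zplus m g₀ - Zminus m g₀) ^ 2 ≤ 0) ∧
    AntitoneOn (formFactorLog m) (Set.Ioi 1) :=
  form_factor_log_monotone_general m
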